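/- Let θ ∈ (0, π/2) and φ ∈ [0, 2θ]. Then the first time at which the point t·(cos θ, sin θ) (moving along the ray from the origin in direction (cos θ, sin θ) at unit speed) inspects P_φ equals 1/cos(θ − φ); that is, inf{ t ≥ 0 : t·(cos θ, sin θ) inspects P_φ } = 1/cos(θ − φ). -/

import Mathlib

open Real Set

/-- The point of the unit circle at angle `φ`. -/
noncomputable def Ppt (φ : ℝ) : EuclideanSpace ℝ (Fin 2) := WithLp.toLp 2 ![Real.cos φ, Real.sin φ]

/-- `A` inspects the perimeter point `P_φ` if no convex combination of `A` and `P_φ`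
lies in the open unit disk. -/
def Inspects (A : EuclideanSpace ℝ (Fin 2)) (φ : ℝ) : Prop :=
  ∀ s ∈ Set.Icc (0:ℝ) 1, 1 ≤ ‖(1 - s) • A + s • Ppt φ‖

/-! Writing the segment from `P_φ` to `A` as `P_φ + u • (A - P_φ)`, `u ∈ [0, 1]`, its squared norm
is `1 + 2u⟪P_φ, A - P_φ⟫ + u²‖A - P_φ‖²`, which stays `≥ 1` exactly when `⟪P_φ, A - P_φ⟫ ≥ 0`:
`A` inspects `P_φ` iff `A` lies beyond the tangent line at `P_φ`, i.e. `⟪A, P_φ⟫ ≥ 1`.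
For `A = t • P_θ` this reads `t cos (θ - φ) ≥ 1`, and `cos (θ - φ) > 0` because `|θ - φ| ≤ θ < π/2`. -/

section UnitVector

variable {E : Type*} [NormedAddCommGroup E] [InnerProductSpace ℝ E] {p : E}

theorem norm_add_smul_sq_of_norm_eq_one (hp : ‖p‖ = 1) (v : E) (u : ℝ) :
    ‖p + u • v‖ ^ 2 = 1 + u * (2 * inner ℝ p v + u * ‖v‖ ^ 2) := by
  rw [norm_add_sq_real, hp, real_inner_smul_right, norm_smul, mul_pow, Real.norm_eq_abs, sq_abs]
  ring

theorem one_le_norm_add_smul_of_inner_nonneg (hp : ‖p‖ = 1) {v : E} (hv : 0 ≤ inner ℝ p v)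
    {u : ℝ} (hu : 0 ≤ u) : 1 ≤ ‖p + u • v‖ := by
  have h := norm_add_smul_sq_of_norm_eq_one hp v u
  have : 0 ≤ u * (2 * inner ℝ p v + u * ‖v‖ ^ 2) := by positivity
  nlinarith [norm_nonneg (p + u • v)]

theorem exists_norm_add_smul_lt_one_of_inner_neg (hp : ‖p‖ = 1) {v : E} (hv : inner ℝ p v < 0) :
    ∃ u ∈ Icc (0 : ℝ) 1, ‖p + u • v‖ < 1 := by
  set d : ℝ := inner ℝ p v
  -- any `0 < u` with `u * ‖v‖ ^ 2 < -d` works; `‖v‖ ^ 2 + 1` keeps the denominator positive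
  have hK : 0 < ‖v‖ ^ 2 + 1 := by positivity
  set u := -d / (‖v‖ ^ 2 + 1)
  have hu0 : 0 < u := div_pos (neg_pos.2 hv) hK
  have huK : u * (‖v‖ ^ 2 + 1) = -d := div_mul_cancel₀ _ hK.ne'
  have hd : -d ≤ ‖v‖ := by
    have := abs_real_inner_le_norm p v
    rw [hp, one_mul] at this
    linarith [neg_abs_le d]
  have hu1 : u ≤ 1 := by
    rw [div_le_one hK]; nlinarith [sq_nonneg (‖v‖ - 1)]
  refine ⟨u, ⟨hu0.le, hu1⟩, ?_⟩
  have hsq : ‖p + u • v‖ ^ 2 < 1 := by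
    rw [norm_add_smul_sq_of_norm_eq_one hp]
    nlinarith
  nlinarith [norm_nonneg (p + u • v)]

end UnitVector

theorem inner_Ppt (θ φ : ℝ) : inner ℝ (Ppt θ) (Ppt φ) = cos (θ - φ) := by
  simp [Ppt, PiLp.inner_apply, Fin.sum_univ_two, Real.cos_sub, mul_comm]

theorem norm_Ppt (φ : ℝ) : ‖Ppt φ‖ = 1 := by
  simp [EuclideanSpace.norm_eq, Ppt]

theorem inspects_iff (A : EuclideanSpace ℝ (Fin 2)) (φ : ℝ) :
    Inspects A φ ↔ 1 ≤ inner ℝ A (Ppt φ) := by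
  have hseg : ∀ s : ℝ, (1 - s) • A + s • Ppt φ = Ppt φ + (1 - s) • (A - Ppt φ) := fun s => by
    rw [smul_sub, sub_smul 1 s (Ppt φ), one_smul]; abel
  have hin : inner ℝ (Ppt φ) (A - Ppt φ) = inner ℝ A (Ppt φ) - 1 := by
    rw [inner_sub_right, real_inner_self_eq_norm_sq, norm_Ppt, real_inner_comm]; ring
  constructor
  · intro h
    by_contra! hlt
    obtain ⟨u, ⟨hu0, hu1⟩, hu⟩ :=
      exists_norm_add_smul_lt_one_of_inner_neg (norm_Ppt φ) (v := A - Ppt φ) (by linarith)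
    have := h (1 - u) ⟨by linarith, by linarith⟩
    rw [hseg, sub_sub_cancel] at this
    linarith
  · intro h s hs
    rw [hseg]
    exact one_le_norm_add_smul_of_inner_nonneg (norm_Ppt φ) (by linarith) (by linarith [hs.2])

theorem inspects_smul_Ppt_iff (t θ φ : ℝ) : Inspects (t • Ppt θ) φ ↔ 1 ≤ t * cos (θ - φ) := by
  rw [inspects_iff, real_inner_smul_left, inner_Ppt]

theorem first_inspection_time_on_ray (θ φ : ℝ) (hθ : θ ∈ Set.Ioo 0 (π/2))
    (hφ : φ ∈ Set.Icc 0 (2*θ)) :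
    sInf {t : ℝ | 0 ≤ t ∧ Inspects (t • Ppt θ) φ} = 1 / Real.cos (θ - φ) := by
  have hc : 0 < cos (θ - φ) :=
    cos_pos_of_mem_Ioo ⟨by linarith [hθ.2, hφ.2], by linarith [hθ.2, hφ.1]⟩
  have hset : {t : ℝ | 0 ≤ t ∧ Inspects (t • Ppt θ) φ} = Ici (1 / cos (θ - φ)) := by
    ext t
    rw [mem_ofPred_eq, mem_Ici, inspects_smul_Ppt_iff, div_le_iff₀ hc]
    exact ⟨And.right, fun h => ⟨by nlinarith [cos_le_one (θ - φ)], h⟩⟩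
  rw [hset, csInf_Ici]
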